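/- arXiv:2207.07614 — 7 statements merged into one kernel-verified Lean document; each statement's English description precedes it below -/
import Mathlib

section
/- A quasi-ordered set (E, ≤) is a well-quasi-order if and only if every subset of E is compact in the Alexandroff topology of ≤ (i.e., the space (E, Alex(≤)) is Noetherian). -/
/-- The Alexandroff topology of a quasi-order: opens are the upwards-closed sets. -/
def alexandroff {E : Type*} (le : E → E → Prop) : TopologicalSpace E where
  IsOpen U := ∀ x y, x ∈ U → le x y → y ∈ U
  isOpen_univ := fun _ _ _ _ => trivial
  isOpen_inter := fun _ _ hU hV x y hx h => ⟨hU x y hx.1 h, hV x y hx.2 h⟩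
  isOpen_sUnion := fun _ hS x y hx h => by
    obtain ⟨t, ht, hxt⟩ := hx; exact ⟨t, ht, hS t ht x y hxt h⟩

/-- A topology is Noetherian when every subset is compact. -/
def Noeth {X : Type*} (t : TopologicalSpace X) : Prop :=
  ∀ s : Set X, @IsCompact X t s

theorem stmt0 {E : Type*} (le : E → E → Prop)
    (hrefl : ∀ x, le x x) (htrans : ∀ x y z, le x y → le y z → le x z) :
    (∀ f : ℕ → E, ∃ i j : ℕ, i < j ∧ le (f i) (f j)) ↔ Noeth (alexandroff le) := by
  classical
  letI T := alexandroff le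
  constructor
  · intro hwqo s
    -- key claim: there is a finite F ⊆ s dominating s from below
    have key : ∃ F : Finset E, (↑F : Set E) ⊆ s ∧ ∀ y ∈ s, ∃ x ∈ F, le x y := by
      by_contra hcon
      push_neg at hcon
      have h : ∀ F : Finset E, (↑F : Set E) ⊆ s → ∃ y, y ∈ s ∧ ∀ x ∈ F, ¬ le x y := by
        intro F hF
        obtain ⟨y, hy, hy2⟩ := hcon F hF
        exact ⟨y, hy, fun x hx hle => hy2 x hx hle⟩
      -- build a bad sequence
      let p : ℕ → {F : Finset E // (↑F : Set E) ⊆ s} := fun n =>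
        Nat.rec ⟨∅, by simp⟩
          (fun _ F => ⟨insert (h F.1 F.2).choose F.1, by
            intro z hz
            simp only [Finset.coe_insert, Set.mem_insert_iff] at hz
            rcases hz with rfl | hz
            · exact (h F.1 F.2).choose_spec.1
            · exact F.2 hz⟩) n
      let f : ℕ → E := fun n => (h (p n).1 (p n).2).choose
      have hf_mem : ∀ n, f n ∈ (p (n + 1)).1 := fun n => Finset.mem_insert_self _ _
      have hmono : ∀ n m, n ≤ m → (p n).1 ⊆ (p m).1 := by
        intro n m hnm
        induction hnm with
        | refl => exact subset_rfl
        | step _ ih => exact ih.trans (Finset.subset_insert _ _)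
      obtain ⟨i, j, hij, hle⟩ := hwqo f
      exact (h (p j).1 (p j).2).choose_spec.2 (f i) (hmono (i + 1) j hij (hf_mem i)) hle
    obtain ⟨F, hFs, hFd⟩ := key
    refine isCompact_of_finite_subcover ?_
    intro ι U hU hcov
    have hx : ∀ x ∈ F, ∃ i, x ∈ U i := by
      intro x hx
      have := hcov (hFs hx)
      simpa using this
    refine ⟨F.attach.image fun x => (hx x.1 x.2).choose, fun y hy => ?_⟩
    obtain ⟨x, hxF, hxy⟩ := hFd y hy
    simp only [Set.mem_iUnion]
    refine ⟨(hx x hxF).choose, Finset.mem_image.2 ⟨⟨x, hxF⟩, Finset.mem_attach _ _, rfl⟩, ?_⟩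
    exact hU (hx x hxF).choose x y (hx x hxF).choose_spec hxy
  · intro hNoeth f
    have hcomp := hNoeth (Set.range f)
    have hopen : ∀ i : ℕ, IsOpen {y | le (f i) y} := by
      intro i x y hx hxy
      exact htrans _ _ _ hx hxy
    have hcov : Set.range f ⊆ ⋃ i : ℕ, {y | le (f i) y} := by
      rintro _ ⟨i, rfl⟩
      exact Set.mem_iUnion.2 ⟨i, hrefl _⟩
    obtain ⟨t, ht⟩ := hcomp.elim_finite_subcover _ hopen hcov
    have hmem : f (t.sup id + 1) ∈ ⋃ i ∈ t, {y | le (f i) y} :=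
      ht (Set.mem_range_self _)
    simp only [Set.mem_iUnion] at hmem
    obtain ⟨i, hit, hle⟩ := hmem
    exact ⟨i, t.sup id + 1, Nat.lt_succ_of_le (Finset.le_sup (f := id) hit), hle⟩
end

section
/- If (X, τ) and (X, τ') are both Noetherian topological spaces on the same underlying set X, then X endowed with the topology generated by τ ∪ τ' is Noetherian. -/
lemma limits_mem {X : Type*} (t : TopologicalSpace X) (h : Noeth t)
    (f : Ultrafilter X) : {x | ↑f ≤ @nhds X t x} ∈ f := by
  by_contra hc
  have hD : {x | ↑f ≤ @nhds X t x}ᶜ ∈ f := Ultrafilter.compl_mem_iff_notMem.2 hc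
  obtain ⟨x, hx, hfx⟩ :=
    (@isCompact_iff_ultrafilter_le_nhds' X t _).1 (h _) f hD
  exact hx hfx

lemma gen_eq {X : Type*} (τ τ' : TopologicalSpace X) :
    TopologicalSpace.generateFrom {U : Set X | τ.IsOpen U ∨ τ'.IsOpen U} = τ ⊓ τ' := by
  apply le_antisymm
  · exact le_inf
      (fun U hU => TopologicalSpace.GenerateOpen.basic U (Or.inl hU))
      (fun U hU => TopologicalSpace.GenerateOpen.basic U (Or.inr hU))
  · rw [TopologicalSpace.le_generateFrom_iff_subset_isOpen]
    rintro U (hU | hU)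
    · exact inf_le_left (α := TopologicalSpace X) _ hU
    · exact inf_le_right (α := TopologicalSpace X) _ hU

theorem stmt3 {X : Type*} (τ τ' : TopologicalSpace X)
    (h : Noeth τ) (h' : Noeth τ') :
    Noeth (TopologicalSpace.generateFrom {U : Set X | τ.IsOpen U ∨ τ'.IsOpen U}) := by
  rw [gen_eq]
  intro s
  rw [@isCompact_iff_ultrafilter_le_nhds' X (τ ⊓ τ') s]
  intro f hsf
  have h1 := limits_mem τ h f
  have h2 := limits_mem τ' h' f
  have hmem : s ∩ ({x | ↑f ≤ @nhds X τ x} ∩ {x | ↑f ≤ @nhds X τ' x}) ∈ f :=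
    Filter.inter_mem hsf (Filter.inter_mem h1 h2)
  obtain ⟨x, hxs, hx1, hx2⟩ := Filter.nonempty_of_mem hmem
  refine ⟨x, hxs, ?_⟩
  rw [nhds_inf (t₁ := τ) (t₂ := τ')]
  exact le_inf hx1 hx2
end

section
/- Let Div be the function mapping a topology τ over ℕ to the topology generated by the sets ↑(U + 1) = { n ∈ ℕ : ∃ m ∈ U, n ≥ m + 1 } for U ∈ τ. Then for every k ≥ 0, the k-fold iterate Div^k applied to the trivial topology {∅, ℕ} equals { ∅, ↑1, ↑2, …, ↑k, ℕ }, where ↑m denotes { n : n ≥ m }. -/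
/-- The refinement function `DivRef` on topologies over ℕ: it maps `τ` to the topology
generated by the upward closures `↑(U + 1)` for `U ∈ τ`. -/
def DivRef (τ : TopologicalSpace ℕ) : TopologicalSpace ℕ :=
  TopologicalSpace.generateFrom
    {V : Set ℕ | ∃ U : Set ℕ, τ.IsOpen U ∧ V = {n | ∃ m ∈ U, m + 1 ≤ n}}

/-- The explicit topology `{∅, ↑1, …, ↑k, ℕ}`. -/
def Tk (k : ℕ) : TopologicalSpace ℕ where
  IsOpen V := V = ∅ ∨ V = Set.univ ∨ ∃ m : ℕ, 1 ≤ m ∧ m ≤ k ∧ V = Set.Ici m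
  isOpen_univ := Or.inr (Or.inl rfl)
  isOpen_inter := by
    rintro s t hs ht
    rcases hs with rfl | rfl | ⟨m, hm1, hmk, rfl⟩
    · exact Or.inl (Set.empty_inter t)
    · rcases ht with rfl | rfl | ⟨m', hm1', hmk', rfl⟩
      · exact Or.inl (Set.inter_empty _)
      · exact Or.inr (Or.inl (Set.univ_inter _))
      · rw [Set.univ_inter]
        exact Or.inr (Or.inr ⟨m', hm1', hmk', rfl⟩)
    · rcases ht with rfl | rfl | ⟨m', hm1', hmk', rfl⟩
      · exact Or.inl (Set.inter_empty _)
      · rw [Set.inter_univ]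
        exact Or.inr (Or.inr ⟨m, hm1, hmk, rfl⟩)
      · rw [Set.Ici_inter_Ici]
        exact Or.inr (Or.inr ⟨max m m', le_trans hm1 (le_max_left _ _),
          max_le hmk hmk', rfl⟩)
  isOpen_sUnion := by
    intro S hS
    by_cases huniv : Set.univ ∈ S
    · refine Or.inr (Or.inl ?_)
      exact Set.eq_univ_of_univ_subset (Set.subset_sUnion_of_mem huniv)
    · by_cases hAne : {m : ℕ | 1 ≤ m ∧ m ≤ k ∧ Set.Ici m ∈ S}.Nonempty
      · set A : Set ℕ := {m | 1 ≤ m ∧ m ≤ k ∧ Set.Ici m ∈ S} with hA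
        have hmem : sInf A ∈ A := Nat.sInf_mem hAne
        obtain ⟨h1, h2, h3⟩ : 1 ≤ sInf A ∧ sInf A ≤ k ∧ Set.Ici (sInf A) ∈ S := hmem
        refine Or.inr (Or.inr ⟨sInf A, h1, h2, ?_⟩)
        apply le_antisymm
        · rintro n ⟨t, htS, hnt⟩
          rcases hS t htS with rfl | rfl | ⟨m, hm1, hmk, rfl⟩
          · exact absurd hnt (Set.notMem_empty n)
          · exact absurd htS huniv
          · exact le_trans (Nat.sInf_le (show m ∈ A from ⟨hm1, hmk, htS⟩)) hnt
        · exact Set.subset_sUnion_of_mem h3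
      · refine Or.inl ?_
        apply Set.eq_empty_iff_forall_notMem.mpr
        rintro n ⟨t, htS, hnt⟩
        rcases hS t htS with rfl | rfl | ⟨m, hm1, hmk, rfl⟩
        · exact Set.notMem_empty n hnt
        · exact huniv htS
        · exact hAne ⟨m, hm1, hmk, htS⟩

lemma upGen (m : ℕ) : {n : ℕ | ∃ p ∈ Set.Ici m, p + 1 ≤ n} = Set.Ici (m + 1) := by
  ext n
  constructor
  · rintro ⟨p, hp, hpn⟩
    exact le_trans (Nat.succ_le_succ hp) hpn
  · intro hn
    exact ⟨m, le_refl m, hn⟩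

lemma divRef_Tk (k : ℕ) : DivRef (Tk k) = Tk (k + 1) := by
  apply le_antisymm
  · -- DivRef (Tk k) ≤ Tk (k+1) : every Tk (k+1)-open set is generated
    intro V hV
    rcases hV with rfl | rfl | ⟨m, hm1, hmk, rfl⟩
    · exact @isOpen_empty _ (DivRef (Tk k))
    · exact TopologicalSpace.GenerateOpen.univ
    · apply TopologicalSpace.GenerateOpen.basic
      refine ⟨Set.Ici (m - 1), ?_, ?_⟩
      · rcases Nat.eq_or_lt_of_le hm1 with h | h
        · refine Or.inr (Or.inl ?_)
          rw [← h]
          simp [Set.Ici]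
        · exact Or.inr (Or.inr ⟨m - 1, by omega, by omega, rfl⟩)
      · rw [upGen, Nat.sub_add_cancel hm1]
  · -- Tk (k+1) ≤ DivRef (Tk k) : every generator is Tk (k+1)-open
    apply le_generateFrom
    rintro V ⟨U, hU, rfl⟩
    rcases hU with rfl | rfl | ⟨m, hm1, hmk, rfl⟩
    · refine Or.inl ?_
      simp
    · refine Or.inr (Or.inr ⟨1, le_refl 1, by omega, ?_⟩)
      ext n
      simp only [Set.mem_setOf_eq, Set.mem_univ, true_and, Set.mem_Ici]
      exact ⟨fun ⟨p, hp⟩ => by omega, fun h => ⟨0, h⟩⟩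
    · rw [upGen]
      exact Or.inr (Or.inr ⟨m + 1, by omega, by omega, rfl⟩)

lemma iterate_eq (k : ℕ) : DivRef^[k] ⊤ = Tk k := by
  induction k with
  | zero =>
    refine TopologicalSpace.ext ?_
    funext V
    simp only [Function.iterate_zero, id_eq, eq_iff_iff]
    constructor
    · intro h
      rcases (TopologicalSpace.isOpen_top_iff V).mp h with rfl | rfl
      · exact Or.inl rfl
      · exact Or.inr (Or.inl rfl)
    · rintro (rfl | rfl | ⟨m, hm1, hmk, rfl⟩)
      · exact (TopologicalSpace.isOpen_top_iff _).mpr (Or.inl rfl)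
      · exact (TopologicalSpace.isOpen_top_iff _).mpr (Or.inr rfl)
      · omega
  | succ n ih =>
    rw [Function.iterate_succ_apply', ih, divRef_Tk]

theorem stmt9 (k : ℕ) (V : Set ℕ) :
    (DivRef^[k] ⊤).IsOpen V ↔
      V = ∅ ∨ V = Set.univ ∨ ∃ m : ℕ, 1 ≤ m ∧ m ≤ k ∧ V = Set.Ici m := by
  rw [iterate_eq]
  exact Iff.rfl
end

section
/- The least fixed point of the function Div, mapping a topology τ over ℕ to the topology generated by the upward closures ↑(U + 1) for U ∈ τ, is the Alexandroff topology of the usual ordering ≤ on ℕ (i.e., the topology of all upwards-closed subsets of ℕ). -/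
lemma upset_open (σ : TopologicalSpace ℕ)
    (h : ∀ U : Set ℕ, σ.IsOpen U → σ.IsOpen {n | ∃ m ∈ U, m + 1 ≤ n}) :
    ∀ k : ℕ, σ.IsOpen {n | k ≤ n} := by
  intro k
  induction k with
  | zero =>
    have : {n : ℕ | 0 ≤ n} = Set.univ := by ext n; simp
    rw [this]; exact σ.isOpen_univ
  | succ k ih =>
    have : {n : ℕ | k + 1 ≤ n} = {n | ∃ m ∈ {n : ℕ | k ≤ n}, m + 1 ≤ n} := by
      ext n
      constructor
      · intro hn; exact ⟨k, le_refl k, hn⟩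
      · rintro ⟨m, hm, hmn⟩; exact le_trans (Nat.add_le_add_right hm 1) hmn
    rw [this]; exact h _ ih

lemma alex_to_sigma (σ : TopologicalSpace ℕ)
    (h : ∀ U : Set ℕ, σ.IsOpen U → σ.IsOpen {n | ∃ m ∈ U, m + 1 ≤ n}) :
    ∀ U : Set ℕ, (alexandroff (· ≤ · : ℕ → ℕ → Prop)).IsOpen U → σ.IsOpen U := by
  intro U hU
  have : U = ⋃₀ { s | ∃ k ∈ U, s = {n : ℕ | k ≤ n} } := by
    ext n
    constructor
    · intro hn; exact ⟨{m | n ≤ m}, ⟨n, hn, rfl⟩, le_refl n⟩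
    · rintro ⟨s, ⟨k, hk, rfl⟩, hns⟩; exact hU k n hk hns
  rw [this]
  apply σ.isOpen_sUnion
  rintro s ⟨k, _, rfl⟩
  exact upset_open σ h k

theorem stmt10 :
    DivRef (alexandroff (· ≤ · : ℕ → ℕ → Prop)) = alexandroff (· ≤ ·) ∧
      ∀ σ : TopologicalSpace ℕ, DivRef σ = σ →
        ∀ U : Set ℕ, (alexandroff (· ≤ · : ℕ → ℕ → Prop)).IsOpen U → σ.IsOpen U := by
  have hbasic : ∀ U : Set ℕ,
      (alexandroff (· ≤ · : ℕ → ℕ → Prop)).IsOpen {n | ∃ m ∈ U, m + 1 ≤ n} := by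
    rintro U x y ⟨m, hm, hmx⟩ hxy
    exact ⟨m, hm, le_trans hmx hxy⟩
  have hle : alexandroff (· ≤ · : ℕ → ℕ → Prop)
      ≤ DivRef (alexandroff (· ≤ · : ℕ → ℕ → Prop)) := by
    apply TopologicalSpace.le_generateFrom_iff_subset_isOpen.2
    rintro s ⟨U, _, rfl⟩
    exact hbasic U
  constructor
  · refine le_antisymm ?_ hle
    rw [TopologicalSpace.le_def]
    intro U hU
    refine alex_to_sigma _ ?_ U hU
    intro V hV
    exact TopologicalSpace.isOpen_generateFrom_of_mem ⟨V, hle V hV, rfl⟩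
  · intro σ hσ
    apply alex_to_sigma
    intro V hV
    rw [← hσ]
    exact TopologicalSpace.isOpen_generateFrom_of_mem ⟨V, hσ ▸ hV, rfl⟩
end

section
/- The prefix topology over Σ* is the least fixed point of the function E_prefix mapping a topology τ on Σ* to the topology generated by the sets UV where U ⊆ Σ (viewed as length-1 words) and V ∈ τ. -/
/-- Concatenation of sets of words: `UV = { uv : u ∈ U, v ∈ V }`. -/
def cat {α : Type*} (U V : Set (List α)) : Set (List α) :=
  {w | ∃ u ∈ U, ∃ v ∈ V, w = u ++ v}

/-- A set of letters viewed as a set of length-1 words. -/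
def lift1 {α : Type*} (U : Set α) : Set (List α) :=
  {w | ∃ a ∈ U, w = [a]}

/-- The set of words `U₁ U₂ ⋯ Uₙ Σ*`. -/
def prefixSet {α : Type*} (L : List (Set α)) : Set (List α) :=
  L.foldr (fun U acc => cat (lift1 U) acc) Set.univ

/-- The prefix topology on `Σ*`, generated by the sets `U₁ ⋯ Uₙ Σ*`. -/
def prefixTop (α : Type*) : TopologicalSpace (List α) :=
  TopologicalSpace.generateFrom {V | ∃ L : List (Set α), V = prefixSet L}

/-- The refinement function `E_prefix`, mapping `τ` to the topology generated by
the sets `UV` with `U ⊆ Σ` (as length-1 words) and `V ∈ τ`. -/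
def Eprefix {α : Type*} (τ : TopologicalSpace (List α)) : TopologicalSpace (List α) :=
  TopologicalSpace.generateFrom
    {W | ∃ U : Set α, ∃ V : Set (List α), τ.IsOpen V ∧ W = cat (lift1 U) V}

lemma cat_lift1_eq {α : Type*} (U : Set α) (V : Set (List α)) :
    cat (lift1 U) V = {w | ∃ a ∈ U, ∃ v ∈ V, w = a :: v} := by
  ext w
  simp only [cat, lift1, Set.mem_setOf_eq]
  constructor
  · rintro ⟨u, ⟨a, ha, rfl⟩, v, hv, rfl⟩; exact ⟨a, ha, v, hv, rfl⟩
  · rintro ⟨a, ha, v, hv, rfl⟩; exact ⟨[a], ⟨a, ha, rfl⟩, v, hv, rfl⟩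

lemma cat_lift1_inter {α : Type*} (U : Set α) (V W : Set (List α)) :
    cat (lift1 U) (V ∩ W) = cat (lift1 U) V ∩ cat (lift1 U) W := by
  ext w
  simp only [cat_lift1_eq, Set.mem_setOf_eq, Set.mem_inter_iff]
  constructor
  · rintro ⟨a, ha, v, ⟨hv, hw⟩, rfl⟩
    exact ⟨⟨a, ha, v, hv, rfl⟩, ⟨a, ha, v, hw, rfl⟩⟩
  · rintro ⟨⟨a, ha, v, hv, rfl⟩, ⟨b, hb, v', hw, heq⟩⟩
    obtain ⟨rfl, rfl⟩ : a = b ∧ v = v' := by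
      simpa [List.cons.injEq] using heq
    exact ⟨a, ha, v, ⟨hv, hw⟩, rfl⟩

lemma cat_lift1_sUnion {α : Type*} (U : Set α) (S : Set (Set (List α))) :
    cat (lift1 U) (⋃₀ S) = ⋃₀ ((cat (lift1 U)) '' S) := by
  ext w
  simp only [cat_lift1_eq, Set.mem_setOf_eq, Set.sUnion_image, Set.mem_iUnion]
  constructor
  · rintro ⟨a, ha, v, ⟨V, hV, hv⟩, rfl⟩
    exact ⟨V, hV, a, ha, v, hv, rfl⟩
  · rintro ⟨V, hV, a, ha, v, hv, rfl⟩
    exact ⟨a, ha, v, ⟨V, hV, hv⟩, rfl⟩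

lemma cat_lift1_univ {α : Type*} (U : Set α) :
    cat (lift1 U) (Set.univ : Set (List α)) = prefixSet [U] := by
  simp [prefixSet]

lemma prefixTop_cat {α : Type*} (U : Set α) {V : Set (List α)}
    (h : (prefixTop α).IsOpen V) : (prefixTop α).IsOpen (cat (lift1 U) V) := by
  induction h with
  | basic V hV =>
      obtain ⟨L, rfl⟩ := hV
      exact TopologicalSpace.GenerateOpen.basic _ ⟨U :: L, rfl⟩
  | univ =>
      rw [cat_lift1_univ]
      exact TopologicalSpace.GenerateOpen.basic _ ⟨[U], rfl⟩
  | inter V W _ _ ihV ihW =>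
      rw [cat_lift1_inter]
      exact TopologicalSpace.GenerateOpen.inter _ _ ihV ihW
  | sUnion S _ ih =>
      rw [cat_lift1_sUnion]
      refine TopologicalSpace.GenerateOpen.sUnion _ ?_
      rintro _ ⟨V, hV, rfl⟩
      exact ih V hV

lemma fixed_prefixSet {α : Type*} {σ : TopologicalSpace (List α)} (hσ : Eprefix σ = σ)
    (L : List (Set α)) : σ.IsOpen (prefixSet L) := by
  induction L with
  | nil => exact σ.isOpen_univ
  | cons U L ih =>
      rw [← hσ]
      exact TopologicalSpace.GenerateOpen.basic _ ⟨U, prefixSet L, ih, rfl⟩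

theorem stmt12 :
    Eprefix (prefixTop Bool) = prefixTop Bool ∧
      ∀ σ : TopologicalSpace (List Bool), Eprefix σ = σ →
        ∀ W : Set (List Bool), (prefixTop Bool).IsOpen W → σ.IsOpen W := by
  constructor
  · apply le_antisymm
    · apply le_generateFrom
      rintro _ ⟨L, rfl⟩
      cases L with
      | nil => exact TopologicalSpace.GenerateOpen.univ
      | cons U L =>
          exact TopologicalSpace.GenerateOpen.basic _
            ⟨U, prefixSet L, TopologicalSpace.GenerateOpen.basic _ ⟨L, rfl⟩, rfl⟩
    · apply le_generateFrom
      rintro _ ⟨U, V, hV, rfl⟩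
      exact prefixTop_cat U hV
  · intro σ hσ W hW
    induction hW with
    | basic V hV => obtain ⟨L, rfl⟩ := hV; exact fixed_prefixSet hσ L
    | univ => exact σ.isOpen_univ
    | inter V W _ _ ihV ihW => exact σ.isOpen_inter _ _ ihV ihW
    | sUnion S _ ih => exact σ.isOpen_sUnion _ ih
end

section
/- Let (Σ, θ) be a Noetherian topological space and ≤* the word embedding (subword) quasi-order on Σ* induced by the specialisation preorder of θ. The function E mapping a topology τ on Σ* to the topology generated by the sets ↑_{≤*}(UV) for U, V ∈ τ and ↑_{≤*}(W) for W ∈ θ (viewing letters as length-1 words) maps Noetherian topologies to Noetherian topologies and is monotone. -/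
/-- The specialisation preorder of a topology. -/
def specLe {α : Type*} (θ : TopologicalSpace α) (x y : α) : Prop :=
  ∀ U : Set α, θ.IsOpen U → x ∈ U → y ∈ U

/-- The word embedding (subword) quasi-order induced by the specialisation
preorder of `θ`. -/
def wordEmb {α : Type*} (θ : TopologicalSpace α) : List α → List α → Prop :=
  List.SublistForall₂ (specLe θ)

/-- Upward closure with respect to the word embedding quasi-order. -/
def upEmb {α : Type*} (θ : TopologicalSpace α) (S : Set (List α)) : Set (List α) :=
  {w | ∃ u ∈ S, wordEmb θ u w}

/-- The refinement function for the subword topology: it maps `τ` to the topology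
generated by the sets `↑(UV)` for `U, V ∈ τ` and `↑W` for `W ∈ θ`. -/
def Esub {α : Type*} (θ : TopologicalSpace α) (τ : TopologicalSpace (List α)) :
    TopologicalSpace (List α) :=
  TopologicalSpace.generateFrom
    ({W | ∃ U V : Set (List α), τ.IsOpen U ∧ τ.IsOpen V ∧ W = upEmb θ (cat U V)} ∪
     {W' | ∃ W : Set α, θ.IsOpen W ∧ W' = upEmb θ (lift1 W)})

/-!
The opens of a Noetherian topology form a Noetherian family of sets (`NoethFamily`: its pointed
members `(x, U)`, `x ∈ U ∈ S`, are well-quasi-ordered by `(x, U) ≼ (y, V) ↔ y ∈ U`), and a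
Noetherian family generates a Noetherian topology. In ultrafilter form the notion is visibly
stable under finite unions, products (Dickson's lemma becomes the intersection of two large sets)
and images along arbitrary relations. The subbasis of `Esub θ τ` lies in a family built this way:
`↑(UV)` is the image of `↑U × ↑V` under concatenation, `↑U` the image of `U` under `≤*`, and for
open `W` the set `↑W` is the image of `W` under the relation `a ∈ w`.
-/

open Set Filter TopologicalSpace

section NoethFamily

variable {X Y : Type*}

/-- Ultrafilter form of: every sequence `(xₙ, Uₙ)` with `xₙ ∈ Uₙ ∈ S` has `m < n` with `xₙ ∈ Uₘ`. -/
def NoethFamily (S : Set (Set X)) : Prop :=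
  ∀ 𝒰 : Ultrafilter (X × Set X), (∀ᶠ p : X × Set X in 𝒰, p.2 ∈ S ∧ p.1 ∈ p.2) →
    ∀ᶠ p : X × Set X in 𝒰, ∀ᶠ q : X × Set X in 𝒰, q.1 ∈ p.2

variable {S T : Set (Set X)}

theorem NoethFamily.eventually_eventually_mem (hS : NoethFamily S) {ι : Type*}
    {𝒰 : Ultrafilter ι} {x : ι → X} {A : ι → Set X} (h : ∀ᶠ i in 𝒰, A i ∈ S ∧ x i ∈ A i) :
    ∀ᶠ i in 𝒰, ∀ᶠ j in 𝒰, x j ∈ A i :=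
  hS (𝒰.map fun i => (x i, A i)) h

theorem NoethFamily.mono (hT : NoethFamily T) (hST : S ⊆ T) : NoethFamily S :=
  fun 𝒰 h𝒰 => hT 𝒰 (h𝒰.mono fun _ hp => ⟨hST hp.1, hp.2⟩)

theorem NoethFamily.union (hS : NoethFamily S) (hT : NoethFamily T) : NoethFamily (S ∪ T) := by
  intro 𝒰 h𝒰
  have : ∀ᶠ p : X × Set X in 𝒰, (p.2 ∈ S ∧ p.1 ∈ p.2) ∨ (p.2 ∈ T ∧ p.1 ∈ p.2) :=
    h𝒰.mono fun _ ⟨hp, hmem⟩ => hp.imp (⟨·, hmem⟩) (⟨·, hmem⟩)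
  exact (Ultrafilter.eventually_or.1 this).elim (hS 𝒰) (hT 𝒰)

theorem NoethFamily.prod {T : Set (Set Y)} (hS : NoethFamily S) (hT : NoethFamily T) :
    NoethFamily (image2 (· ×ˢ ·) S T) := by
  intro 𝒰 h𝒰
  choose! A hA B hB hAB using
    fun (p : (X × Y) × Set (X × Y)) (hp : p.2 ∈ image2 (· ×ˢ ·) S T) => hp
  have hfst : ∀ᶠ p in 𝒰, ∀ᶠ q : (X × Y) × Set (X × Y) in 𝒰, q.1.1 ∈ A p :=
    hS.eventually_eventually_mem <| h𝒰.mono fun p ⟨hp, hmem⟩ =>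
      ⟨hA p hp, ((hAB p hp).symm ▸ hmem).1⟩
  have hsnd : ∀ᶠ p in 𝒰, ∀ᶠ q : (X × Y) × Set (X × Y) in 𝒰, q.1.2 ∈ B p :=
    hT.eventually_eventually_mem <| h𝒰.mono fun p ⟨hp, hmem⟩ =>
      ⟨hB p hp, ((hAB p hp).symm ▸ hmem).2⟩
  filter_upwards [h𝒰, hfst, hsnd] with p ⟨hp, _⟩ hpA hpB
  filter_upwards [hpA, hpB] with q hqA hqB
  exact hAB p hp ▸ ⟨hqA, hqB⟩

theorem NoethFamily.image_rel {S : Set (Set Y)} (hS : NoethFamily S) (R : Y → X → Prop) :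
    NoethFamily ((fun A => {x | ∃ y ∈ A, R y x}) '' S) := by
  intro 𝒰 h𝒰
  choose! A hA hAp using
    fun (p : X × Set X) (hp : p.2 ∈ (fun A => {x | ∃ y ∈ A, R y x}) '' S) => hp
  have : Nonempty Y := by
    obtain ⟨p, ⟨B, -, hB⟩, hmem⟩ := h𝒰.exists
    obtain ⟨y, -⟩ := hB ▸ hmem
    exact ⟨y⟩
  choose! y hy hyR using fun (p : X × Set X)
    (hp : p.2 ∈ (fun A => {x | ∃ y ∈ A, R y x}) '' S ∧ p.1 ∈ p.2) => hAp p hp.1 ▸ hp.2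
  have hyA : ∀ᶠ p in 𝒰, ∀ᶠ q in 𝒰, y q ∈ A p :=
    hS.eventually_eventually_mem <| h𝒰.mono fun p hp => ⟨hA p hp.1, hy p hp⟩
  filter_upwards [h𝒰, hyA] with p hp hpA
  filter_upwards [h𝒰, hpA] with q hq hqA
  exact hAp p hp.1 ▸ ⟨y q, hqA, hyR q hq⟩

/-- Otherwise `𝒰` is carried by pointed opens `(x, U)` with `U` missing `𝒰`-almost all points;
by compactness the points converge to one of them, `x`, and then `U ∈ 𝓝 x` is `𝒰`-large. -/
theorem Noeth.noethFamily_isOpen {t : TopologicalSpace X} (ht : Noeth t) :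
    NoethFamily {U | t.IsOpen U} := by
  let _ := t
  intro 𝒰 h𝒰
  by_contra hbad
  have hmiss : ∀ᶠ p : X × Set X in 𝒰,
      (IsOpen p.2 ∧ p.1 ∈ p.2) ∧ ¬∀ᶠ q : X × Set X in 𝒰, q.1 ∈ p.2 :=
    h𝒰.and (Ultrafilter.eventually_not.2 hbad)
  obtain ⟨_, ⟨p, ⟨⟨hpU, hpx⟩, hp⟩, rfl⟩, hle⟩ :=
    (ht _).ultrafilter_le_nhds' (𝒰.map Prod.fst) (image_mem_map hmiss)
  exact hp (hle (hpU.mem_nhds hpx))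

theorem NoethFamily.noeth_generateFrom (hS : NoethFamily S) : Noeth (generateFrom S) := by
  let _ := generateFrom S
  intro s
  refine isCompact_iff_ultrafilter_le_nhds'.2 fun F hsF => ?_
  by_contra! hF
  have hC : ∀ x ∈ s, ∃ C, x ∈ C ∧ C ∈ S ∧ C ∉ F := fun x hx => by
    simpa [nhds_generateFrom] using hF x hx
  choose! C hxC hCS hCF using hC
  have hCx : ∀ᶠ x in F, ∀ᶠ y in F, y ∈ C x :=
    hS.eventually_eventually_mem (F.mem_of_superset hsF fun x hx => ⟨hCS x hx, hxC x hx⟩)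
  obtain ⟨x, hx, hxs⟩ := (hCx.and hsF).exists
  exact hCF x hxs hx

end NoethFamily

namespace List

variable {α β : Type*} {R : α → β → Prop}

theorem sublistForall₂_append_left_iff {u v : List α} {w : List β} :
    SublistForall₂ R (u ++ v) w ↔
      ∃ y z, y ++ z = w ∧ SublistForall₂ R u y ∧ SublistForall₂ R v z := by
  simp only [sublistForall₂_iff]
  constructor
  · rintro ⟨l, hl, hlw⟩
    rw [← take_append_drop u.length l] at hlw
    obtain ⟨y, z, rfl, hy, hz⟩ := append_sublist_iff.1 hlw
    exact ⟨y, z, rfl, ⟨_, (forall₂_take_append l u v hl.flip).flip, hy⟩,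
      ⟨_, (forall₂_drop_append l u v hl.flip).flip, hz⟩⟩
  · rintro ⟨y, z, rfl, ⟨l₁, h₁, s₁⟩, ⟨l₂, h₂, s₂⟩⟩
    exact ⟨l₁ ++ l₂, rel_append h₁ h₂, s₁.append s₂⟩

theorem sublistForall₂_singleton_iff {a : α} {w : List β} :
    SublistForall₂ R [a] w ↔ ∃ b ∈ w, R a b := by
  simp [sublistForall₂_iff, forall₂_cons_left_iff, and_comm]

end List

section Words

variable {α : Type*} (θ : TopologicalSpace α)

theorem upEmb_cat (U V : Set (List α)) :
    upEmb θ (cat U V) = {w | ∃ p ∈ upEmb θ U ×ˢ upEmb θ V, p.1 ++ p.2 = w} := by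
  ext w
  constructor
  · rintro ⟨_, ⟨u, hu, v, hv, rfl⟩, huv⟩
    obtain ⟨y, z, rfl, hy, hz⟩ := List.sublistForall₂_append_left_iff.1 huv
    exact ⟨(y, z), ⟨⟨u, hu, hy⟩, ⟨v, hv, hz⟩⟩, rfl⟩
  · rintro ⟨⟨y, z⟩, ⟨⟨u, hu, hy⟩, ⟨v, hv, hz⟩⟩, rfl⟩
    exact ⟨u ++ v, ⟨u, hu, v, hv, rfl⟩,
      List.sublistForall₂_append_left_iff.2 ⟨y, z, rfl, hy, hz⟩⟩

theorem upEmb_lift1 {W : Set α} (hW : θ.IsOpen W) :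
    upEmb θ (lift1 W) = {w | ∃ a ∈ W, a ∈ w} := by
  ext w
  constructor
  · rintro ⟨_, ⟨a, ha, rfl⟩, haw⟩
    obtain ⟨b, hb, hab⟩ := List.sublistForall₂_singleton_iff.1 haw
    exact ⟨b, hab W hW ha, hb⟩
  · rintro ⟨a, ha, haw⟩
    exact ⟨[a], ⟨a, ha, rfl⟩, List.sublistForall₂_singleton_iff.2 ⟨a, haw, fun _ _ h => h⟩⟩

theorem esub_mono : Monotone (Esub θ) := by
  intro τ' τ h
  have hopen := TopologicalSpace.le_def.1 h
  refine generateFrom_anti ?_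
  rintro _ (⟨U, V, hU, hV, rfl⟩ | hW)
  · exact Or.inl ⟨U, V, hopen U hU, hopen V hV, rfl⟩
  · exact Or.inr hW

theorem noeth_esub {τ : TopologicalSpace (List α)} (hθ : Noeth θ) (hτ : Noeth τ) :
    Noeth (Esub θ τ) := by
  have hup : NoethFamily (upEmb θ '' {U | τ.IsOpen U}) :=
    hτ.noethFamily_isOpen.image_rel (wordEmb θ)
  have hcat := (hup.prod hup).image_rel fun p w => p.1 ++ p.2 = w
  have hletter := hθ.noethFamily_isOpen.image_rel fun (a : α) (w : List α) => a ∈ w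
  refine ((hcat.union hletter).mono ?_).noeth_generateFrom
  rintro _ (⟨U, V, hU, hV, rfl⟩ | ⟨W, hW, rfl⟩)
  · exact Or.inl ⟨_, mem_image2_of_mem (mem_image_of_mem _ hU) (mem_image_of_mem _ hV),
      (upEmb_cat θ U V).symm⟩
  · exact Or.inr ⟨W, hW, (upEmb_lift1 θ hW).symm⟩

end Words

theorem stmt14 {α : Type*} (θ : TopologicalSpace α) (hθ : Noeth θ) :
    (∀ τ τ' : TopologicalSpace (List α),
      (∀ U, τ.IsOpen U → τ'.IsOpen U) →
        ∀ U, (Esub θ τ).IsOpen U → (Esub θ τ').IsOpen U) ∧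
    (∀ τ : TopologicalSpace (List α), Noeth τ → Noeth (Esub θ τ)) :=
  ⟨fun _ _ h => TopologicalSpace.le_def.1 (esub_mono θ (TopologicalSpace.le_def.2 h)),
    fun _ hτ => noeth_esub θ hθ hτ⟩
end

section
/- Topological Higman lemma: if (Σ, θ) is a Noetherian topological space, then Σ* endowed with the subword topology, generated by the sets Σ*U₁Σ*⋯Σ*U_nΣ* for U_i open in θ, is Noetherian. -/
/-- The set of words `Σ* U₁ Σ* U₂ ⋯ Σ* Uₙ Σ*`. -/
def openword {α : Type*} (L : List (Set α)) : Set (List α) :=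
  L.foldr (fun U acc => cat Set.univ (cat (lift1 U) acc)) Set.univ

/-- The subword topology on `Σ*`. -/
def subwordTop {α : Type*} (θ : TopologicalSpace α) : TopologicalSpace (List α) :=
  TopologicalSpace.generateFrom
    {V | ∃ L : List (Set α), (∀ U ∈ L, θ.IsOpen U) ∧ V = openword L}

/-!
A space is Noetherian iff every sequence of points `xₙ ∈ Vₙ`, `Vₙ` open, has `xⱼ ∈ Vᵢ` for some
`i < j`; by Alexander's subbasis theorem it suffices to check this for subbasic opens. For `Σ*`
these are the sets `Σ*U₁Σ*⋯UₙΣ*`, i.e. the words into which `[U₁, …, Uₙ]` embeds as in Higman's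
lemma, and the property is proved by Nash-Williams' minimal bad sequence argument: strip the first
letter off every word of a minimal bad sequence, use an ultrafilter and the compactness of all
subsets of `Σ` to pass to a subsequence whose first letters lie in each other's constraints, and
splice in the tails to get a smaller bad sequence.
-/

open Set Filter TopologicalSpace

theorem Filter.Eventually.exists_seq_forall_lt_rel {ι : Type*} {f : Filter ι} [f.NeBot]
    {R : ι → ι → Prop} (h : ∀ᶠ i in f, ∀ᶠ j in f, R i j) :
    ∃ φ : ℕ → ι, ∀ m n, m < n → R (φ m) (φ n) := by
  have : Nonempty ι := f.nonempty_of_neBot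
  choose! pick hpick using fun T (hT : T ∈ f) => f.nonempty_of_mem hT
  -- `T k` holds the candidates for `φ k`: good left endpoints related to all earlier choices.
  let T : ℕ → Set ι := fun k =>
    Nat.rec {i | ∀ᶠ j in f, R i j} (fun _ T => T ∩ {j | R (pick T) j}) k
  have hT : ∀ k, T k ∈ f ∧ T k ⊆ {i | ∀ᶠ j in f, R i j} := by
    intro k
    induction k with
    | zero => exact ⟨h, subset_rfl⟩
    | succ k ih => exact ⟨inter_mem ih.1 (ih.2 (hpick _ ih.1)), inter_subset_left.trans ih.2⟩
  have hanti : Antitone T := antitone_nat_of_succ_le fun k => inter_subset_left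
  refine ⟨fun k => pick (T k), fun m n hmn => ?_⟩
  exact (hanti (Nat.succ_le_of_lt hmn) (hpick _ (hT n).1)).2

namespace TopologicalSpace.NoetherianSpace

variable {X : Type*} [TopologicalSpace X] [NoetherianSpace X]

theorem eventually_eventually_mem {ι : Type*} (𝒰 : Ultrafilter ι) {x : ι → X}
    {V : ι → Set X} (hV : ∀ i, IsOpen (V i)) (hx : ∀ i, x i ∈ V i) :
    ∀ᶠ i in 𝒰, ∀ᶠ j in 𝒰, x j ∈ V i := by
  by_contra h
  set S := {i | ¬∀ᶠ j in 𝒰, x j ∈ V i}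
  have hS : S ∈ 𝒰 := Ultrafilter.frequently_iff_eventually.mp (not_eventually.mp h)
  obtain ⟨t, htS, ht, hcover⟩ := (NoetherianSpace.isCompact (x '' S)).elim_finite_subcover_image
    (fun i _ => hV i) (by rintro _ ⟨i, hi, rfl⟩; exact mem_biUnion hi (hx i))
  have hmem : (⋃ i ∈ t, x ⁻¹' V i) ∈ 𝒰 :=
    𝒰.mem_of_superset hS fun i hi => by simpa using hcover (mem_image_of_mem x hi)
  obtain ⟨i, hit, hi⟩ := (Ultrafilter.finite_biUnion_mem_iff ht).mp hmem
  exact htS hit hi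

theorem exists_strictMono_forall_lt_mem {x : ℕ → X} {V : ℕ → Set X}
    (hV : ∀ n, IsOpen (V n)) (hx : ∀ n, x n ∈ V n) :
    ∃ φ : ℕ → ℕ, StrictMono φ ∧ ∀ m n, m < n → x (φ n) ∈ V (φ m) := by
  have hgt : ∀ m, ∀ᶠ n in hyperfilter ℕ, m < n := fun m =>
    hyperfilter_le_cofinite (Nat.cofinite_eq_atTop ▸ eventually_gt_atTop m)
  obtain ⟨φ, hφ⟩ := ((eventually_eventually_mem (hyperfilter ℕ) hV hx).mono fun m hm =>
    (hgt m).and hm).exists_seq_forall_lt_rel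
  exact ⟨φ, fun m n h => (hφ m n h).1, fun m n h => (hφ m n h).2⟩

end TopologicalSpace.NoetherianSpace

theorem isCompact_of_partiallyWellOrderedOn_generateFrom {X ι : Type*} [T : TopologicalSpace X]
    {P : ι → Prop} {V : ι → Set X} (hT : T = generateFrom {U | ∃ i, P i ∧ U = V i})
    (hpwo : {p : X × ι | P p.2 ∧ p.1 ∈ V p.2}.PartiallyWellOrderedOn (fun p q => q.1 ∈ V p.2))
    (s : Set X) : IsCompact s := by
  rw [isCompact_iff_ultrafilter_le_nhds', hT]
  intro 𝒰 hs𝒰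
  by_contra! h
  have hsub : ∀ x ∈ s, ∃ i, P i ∧ x ∈ V i ∧ V i ∉ 𝒰 := by
    simpa [nhds_generateFrom, and_left_comm, and_assoc] using h
  have : Nonempty ι := let ⟨x, hx⟩ := 𝒰.nonempty_of_mem hs𝒰; ⟨(hsub x hx).choose⟩
  choose! i hPi hxi hi𝒰 using hsub
  have hev : ∀ᶠ x in 𝒰, ∀ᶠ y in 𝒰, x ∈ s ∧ y ∉ V (i x) :=
    Filter.mem_of_superset hs𝒰 fun x hx =>
      Filter.mem_of_superset (𝒰.compl_mem_iff_notMem.mpr (hi𝒰 x hx)) fun _ hy => ⟨hx, hy⟩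
  obtain ⟨φ, hφ⟩ := hev.exists_seq_forall_lt_rel
  have hφs : ∀ n, φ n ∈ s := fun n => (hφ n (n + 1) n.lt_succ_self).1
  obtain ⟨m, n, hmn, hmem⟩ :=
    hpwo.exists_lt (f := fun n => (φ n, i (φ n))) fun n => ⟨hPi _ (hφs n), hxi _ (hφs n)⟩
  exact (hφ m n hmn).2 hmem

theorem List.sublistForall₂_cons_left_iff {α β : Type*} {R : α → β → Prop} {x : α} {l : List α}
    {w : List β} :
    List.SublistForall₂ R (x :: l) w ↔
      ∃ p a r, w = p ++ a :: r ∧ R x a ∧ List.SublistForall₂ R l r := by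
  induction w with
  | nil => simp [List.sublistForall₂_iff]
  | cons b w ih =>
    constructor
    · rintro (_ | ⟨hxb, hl⟩ | ⟨h⟩)
      · exact ⟨[], b, w, rfl, hxb, hl⟩
      · obtain ⟨p, a, r, rfl, hxa, hl⟩ := ih.mp h
        exact ⟨b :: p, a, r, rfl, hxa, hl⟩
    · rintro ⟨_ | ⟨c, p⟩, a, r, hw, hxa, hl⟩ <;> simp only [List.nil_append, List.cons_append,
        List.cons.injEq] at hw <;> obtain ⟨rfl, rfl⟩ := hw
      · exact .cons hxa hl
      · exact .cons_right (ih.mpr ⟨p, a, r, rfl, hxa, hl⟩)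

section openword

variable {α : Type*} {L K : List (Set α)} {U : Set α} {a : α} {v : List α}

theorem mem_openword_iff {w : List α} :
    w ∈ openword L ↔ List.SublistForall₂ (fun U a => a ∈ U) L w := by
  induction L generalizing w with
  | nil => exact ⟨fun _ => .nil, fun _ => mem_univ w⟩
  | cons U L ih =>
    rw [List.sublistForall₂_cons_left_iff]
    change w ∈ cat univ (cat (lift1 U) (openword L)) ↔ _
    constructor
    · rintro ⟨p, -, _, ⟨_, ⟨a, ha, rfl⟩, r, hr, rfl⟩, rfl⟩
      exact ⟨p, a, r, rfl, ha, ih.mp hr⟩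
    · rintro ⟨p, a, r, rfl, ha, hr⟩
      exact ⟨p, mem_univ p, _, ⟨[a], ⟨a, ha, rfl⟩, r, ih.mpr hr, rfl⟩, rfl⟩

theorem eq_nil_of_nil_mem_openword (h : [] ∈ openword L) : L = [] := by
  rw [mem_openword_iff] at h
  cases h
  rfl

theorem cons_mem_openword_of_mem (h : v ∈ openword L) : a :: v ∈ openword L :=
  mem_openword_iff.mpr (.cons_right (mem_openword_iff.mp h))

theorem cons_mem_openword_cons (ha : a ∈ U) (hv : v ∈ openword K) : a :: v ∈ openword (U :: K) :=
  mem_openword_iff.mpr (.cons ha (mem_openword_iff.mp hv))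

/-- The constraint that `a :: v ∈ openword L` places on the letter `a`: either none (`U = univ`,
`K = L`) or membership in the first open set of `L`. -/
theorem exists_cons_mem_openword_imp [TopologicalSpace α] (hL : ∀ V ∈ L, IsOpen V)
    (h : a :: v ∈ openword L) :
    ∃ U K, IsOpen U ∧ (∀ V ∈ K, IsOpen V) ∧ a ∈ U ∧ v ∈ openword K ∧
      ∀ b u, b ∈ U → u ∈ openword K → b :: u ∈ openword L := by
  rw [mem_openword_iff] at h
  rcases h with _ | ⟨ha, hv⟩ | ⟨hv⟩
  · exact ⟨univ, [], isOpen_univ, by simp, mem_univ a, mem_univ v, fun _ _ _ _ => mem_univ _⟩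
  · refine ⟨_, _, hL _ List.mem_cons_self, fun V hV => hL V (List.mem_cons_of_mem _ hV), ha,
      mem_openword_iff.mpr hv, fun b u hb hu => cons_mem_openword_cons hb hu⟩
  · exact ⟨univ, L, isOpen_univ, hL, mem_univ a, mem_openword_iff.mpr hv,
      fun b u _ hu => cons_mem_openword_of_mem hu⟩

end openword

/-- The inductive step of Nash-Williams' minimal bad sequence argument. -/
theorem Set.PartiallyWellOrderedOn.IsBadSeq.splice {β : Type*} {r : β → β → Prop} {s : Set β}
    {f t : ℕ → β} {φ : ℕ → ℕ} (hf : IsBadSeq r s f) (hφ : StrictMono φ) (ht : ∀ n, t n ∈ s)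
    (hft : ∀ m n, r (f m) (t n) → r (f m) (f (φ n)))
    (htt : ∀ m n, m < n → r (t m) (t n) → r (f (φ m)) (f (φ n))) :
    IsBadSeq r s fun n => if n < φ 0 then f n else t (n - φ 0) := by
  refine ⟨fun n => ?_, fun m n hmn => ?_⟩ <;> dsimp only
  · split_ifs
    exacts [hf.1 n, ht _]
  by_cases hn : n < φ 0
  · rw [if_pos (hmn.trans hn), if_pos hn]
    exact hf.2 m n hmn
  rw [if_neg hn]
  by_cases hm : m < φ 0
  · rw [if_pos hm]
    exact fun h => hf.2 m _ (hm.trans_le (hφ.monotone (Nat.zero_le _))) (hft m _ h)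
  · rw [if_neg hm]
    have hlt : m - φ 0 < n - φ 0 := by omega
    exact fun h => hf.2 _ _ (hφ hlt) (htt _ _ hlt h)

theorem partiallyWellOrderedOn_openword {α : Type*} [TopologicalSpace α] [NoetherianSpace α] :
    {p : List α × List (Set α) | (∀ U ∈ p.2, IsOpen U) ∧ p.1 ∈ openword p.2}.PartiallyWellOrderedOn
      fun p q => q.1 ∈ openword p.2 := by
  rw [Set.PartiallyWellOrderedOn.iff_not_exists_isMinBadSeq fun p => p.1.length]
  rintro ⟨f, hf, hmin⟩
  have hne : ∀ n, (f n).1 ≠ [] := fun n hn => hf.2 n (n + 1) n.lt_succ_self <| by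
    have hnil := (hf.1 n).2
    rw [hn] at hnil
    show _ ∈ openword (f n).2
    rw [eq_nil_of_nil_mem_openword hnil]
    exact mem_univ _
  choose a v hav using fun n => List.exists_cons_of_ne_nil (hne n)
  choose U K hU hK haU hvK hUK using fun n =>
    exists_cons_mem_openword_imp (hf.1 n).1 (hav n ▸ (hf.1 n).2)
  obtain ⟨φ, hφ, haφ⟩ := NoetherianSpace.exists_strictMono_forall_lt_mem hU haU
  refine hmin (φ 0) _ (fun m hm => (if_pos hm).symm) ?_ <|
    hf.splice hφ (t := fun n => (v (φ n), K (φ n))) (fun n => ⟨hK _, hvK _⟩) ?_ ?_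
  · simp [hav]
  · intro m n h
    rw [hav]
    exact cons_mem_openword_of_mem h
  · intro m n hmn h
    rw [hav]
    exact hUK _ _ _ (haφ m n hmn) h

/-- Topological Higman lemma. -/
theorem stmt16 {α : Type*} (θ : TopologicalSpace α) (hθ : Noeth θ) :
    Noeth (subwordTop θ) := by
  let _ := θ
  have : NoetherianSpace α := noetherianSpace_iff_isCompact.mpr hθ
  exact @isCompact_of_partiallyWellOrderedOn_generateFrom _ _ (subwordTop θ) _ _ rfl
    partiallyWellOrderedOn_openword
end
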